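/- arXiv:2604.13111 — 4 statements merged into one kernel-verified Lean document; each statement's English description precedes it below -/
import Mathlib

section
/- For every real a < 0 and all reals X > Y > 0, one has Y^a − X^a ≤ max(|a|,1) · (X − Y) · Y^a · X^{−1}. -/
/-- For every real `a < 0` and reals `X > Y > 0`:
`Y^a − X^a ≤ max(|a|,1) · (X − Y) · Y^a · X⁻¹` (real powers). -/
theorem rpow_diff_le_of_neg (a X Y : ℝ) (ha : a < 0) (hY : 0 < Y) (hXY : Y < X) :
    Y ^ a - X ^ a ≤ max |a| 1 * (X - Y) * Y ^ a * X⁻¹ := by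
  have hX : 0 < X := hY.trans hXY
  set b := -a with hb
  have hb0 : 0 < b := by simp [hb]; linarith
  have habs : |a| = b := abs_of_neg ha
  set t := Y / X with ht
  have ht0 : 0 < t := div_pos hY hX
  have ht1 : t < 1 := (div_lt_one hX).mpr hXY
  have key : 1 - t ^ b ≤ max b 1 * (1 - t) := by
    rcases le_total b 1 with h | h
    · have h1 : t ≤ t ^ b := by
        nth_rewrite 1 [← Real.rpow_one t]
        exact Real.rpow_le_rpow_of_exponent_ge ht0 ht1.le h
      have h2 : max b 1 = 1 := max_eq_right h
      rw [h2]; nlinarith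
    · have h1 := one_add_mul_self_le_rpow_one_add (by linarith : (-1:ℝ) ≤ t - 1) h
      have h2 : 1 + b * (t - 1) ≤ t ^ b := by
        have : (1 : ℝ) + (t - 1) = t := by ring
        rwa [this] at h1
      have h3 : max b 1 = b := max_eq_left h
      rw [h3]; nlinarith
  have hYa : 0 < Y ^ a := Real.rpow_pos_of_pos hY a
  have hXa : 0 < X ^ a := Real.rpow_pos_of_pos hX a
  have htb : t ^ b = X ^ a / Y ^ a := by
    rw [ht, hb, Real.rpow_neg (by positivity), Real.div_rpow hY.le hX.le]
    rw [inv_div]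
  have e1 : Y ^ a - X ^ a = Y ^ a * (1 - t ^ b) := by
    rw [htb]; field_simp
  have e2 : max |a| 1 * (X - Y) * Y ^ a * X⁻¹ = Y ^ a * (max b 1 * (1 - t)) := by
    rw [habs, ht]; field_simp
  rw [e1, e2]
  exact mul_le_mul_of_nonneg_left key hYa.le
end

section
/- For all natural numbers a, b, j, the binomial coefficient satisfies C(a,j) ≤ 3^j · (C(a−b, j) + 1) · (b^j + 1). -/
open Finset

lemma aux_succ_le_three_pow (j : ℕ) : j + 1 ≤ 3 ^ j := by
  induction j with
  | zero => simp
  | succ n ih => calc n + 1 + 1 ≤ 3 ^ n + 3 ^ n := by omega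
                   _ ≤ 3 ^ (n+1) := by ring_nf; nlinarith [ih]

lemma aux_two_pow_le_central (d : ℕ) : 2 ^ d ≤ (2 * d).choose d := by
  have h : ∀ n, 2 ^ n ≤ Nat.centralBinom n := by
    intro n
    induction n with
    | zero => simp [Nat.centralBinom]
    | succ n ih =>
      have key := Nat.succ_mul_centralBinom_succ n
      have hpos := Nat.centralBinom_pos n
      have : (n + 1) * (2 * Nat.centralBinom n) ≤ (n + 1) * Nat.centralBinom (n + 1) := by
        rw [key]; nlinarith
      have h2 : 2 * Nat.centralBinom n ≤ Nat.centralBinom (n + 1) :=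
        Nat.le_of_mul_le_mul_left this (Nat.succ_pos n)
      calc 2 ^ (n + 1) = 2 * 2 ^ n := by ring
        _ ≤ 2 * Nat.centralBinom n := by omega
        _ ≤ _ := h2
  simpa [Nat.centralBinom] using h d

lemma aux_sum_choose_le (m j : ℕ) : ∑ k ∈ range (j + 1), m.choose k ≤ 2 ^ m := by
  rcases le_or_gt j m with h | h
  · calc ∑ k ∈ range (j + 1), m.choose k ≤ ∑ k ∈ range (m + 1), m.choose k :=
        Finset.sum_le_sum_of_subset (Finset.range_subset_range.2 (by omega))
      _ = 2 ^ m := Nat.sum_range_choose m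
  · have : ∑ k ∈ range (j + 1), m.choose k = ∑ k ∈ range (m + 1), m.choose k := by
      refine (Finset.sum_subset (Finset.range_subset_range.2 (by omega)) ?_).symm
      intro x hx hnx
      simp only [Finset.mem_range] at hx hnx
      exact Nat.choose_eq_zero_of_lt (by omega)
    rw [this, Nat.sum_range_choose]

lemma aux_choose_mono (m : ℕ) : ∀ j k, k ≤ j → 2 * j ≤ m → m.choose k ≤ m.choose j := by
  intro j
  induction j with
  | zero => intro k hk _; obtain rfl := Nat.le_zero.mp hk; exact le_refl _
  | succ n ih =>
    intro k hk hm
    rcases Nat.eq_or_lt_of_le hk with rfl | hlt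
    · exact le_refl _
    · have h1 : m.choose k ≤ m.choose n := ih k (by omega) (by omega)
      have h2 : m.choose n ≤ m.choose (n + 1) :=
        Nat.choose_le_succ_of_lt_half_left (by omega)
      exact h1.trans h2

lemma aux_two_pow_m_le (m j : ℕ) (h : m < 2 * j) : 2 ^ m ≤ 3 ^ j * (m.choose j + 1) := by
  rcases le_or_gt m j with hmj | hjm
  · calc 2 ^ m ≤ 3 ^ m := Nat.pow_le_pow_left (by norm_num) m
      _ ≤ 3 ^ j := Nat.pow_le_pow_right (by norm_num) hmj
      _ ≤ 3 ^ j * (m.choose j + 1) := Nat.le_mul_of_pos_right _ (by omega)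
  · set d := m - j with hd
    have hsymm : m.choose j = m.choose d := by
      rw [hd, ← Nat.choose_symm (le_of_lt hjm)]
    have h2d : 2 ^ d ≤ m.choose d :=
      (aux_two_pow_le_central d).trans (Nat.choose_le_choose d (by omega))
    calc 2 ^ m = 2 ^ j * 2 ^ d := by rw [← pow_add]; congr 1; omega
      _ ≤ 3 ^ j * m.choose d := by
          exact Nat.mul_le_mul (Nat.pow_le_pow_left (by norm_num) j) h2d
      _ ≤ 3 ^ j * (m.choose j + 1) := by rw [hsymm]; exact Nat.mul_le_mul_left _ (by omega)

lemma aux_main (m b j : ℕ) (hb : 1 ≤ b) :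
    ∑ k ∈ range (j + 1), m.choose k * b ^ (j - k) ≤ 3 ^ j * (m.choose j + 1) * b ^ j := by
  have hbk : ∀ k, k ≤ j → b ^ (j - k) ≤ b ^ j := fun k hk =>
    Nat.pow_le_pow_right hb (by omega)
  rcases le_or_gt (2 * j) m with hc | hc
  · -- each term ≤ choose m j * b^j
    calc ∑ k ∈ range (j + 1), m.choose k * b ^ (j - k)
        ≤ ∑ _k ∈ range (j + 1), m.choose j * b ^ j := by
          refine Finset.sum_le_sum ?_
          intro k hk
          simp only [Finset.mem_range] at hk
          exact Nat.mul_le_mul (aux_choose_mono m j k (by omega) hc) (hbk k (by omega))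
      _ = (j + 1) * (m.choose j * b ^ j) := by rw [Finset.sum_const, Finset.card_range]; ring
      _ = ((j + 1) * m.choose j) * b ^ j := by ring
      _ ≤ (3 ^ j * (m.choose j + 1)) * b ^ j := by
          refine Nat.mul_le_mul_right _ ?_
          have := aux_succ_le_three_pow j
          nlinarith
  · calc ∑ k ∈ range (j + 1), m.choose k * b ^ (j - k)
        ≤ ∑ k ∈ range (j + 1), m.choose k * b ^ j := by
          refine Finset.sum_le_sum ?_
          intro k hk
          simp only [Finset.mem_range] at hk
          exact Nat.mul_le_mul_left _ (hbk k (by omega))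
      _ = (∑ k ∈ range (j + 1), m.choose k) * b ^ j := by rw [Finset.sum_mul]
      _ ≤ 2 ^ m * b ^ j := Nat.mul_le_mul_right _ (aux_sum_choose_le m j)
      _ ≤ 3 ^ j * (m.choose j + 1) * b ^ j :=
          Nat.mul_le_mul_right _ (aux_two_pow_m_le m j hc)

/-- For all natural numbers `a, b, j`:
`C(a,j) ≤ 3^j · (C(a−b, j) + 1) · (b^j + 1)`, with truncated subtraction. -/
theorem choose_le_choose_sub_mul (a b j : ℕ) :
    Nat.choose a j ≤ 3 ^ j * (Nat.choose (a - b) j + 1) * (b ^ j + 1) := by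
  rcases Nat.eq_zero_or_pos b with rfl | hb
  · simp only [Nat.sub_zero]
    have h1 : (1:ℕ) ≤ 3 ^ j := Nat.one_le_pow _ _ (by norm_num)
    calc a.choose j ≤ 1 * (a.choose j + 1) * 1 := by omega
      _ ≤ 3 ^ j * (a.choose j + 1) * (0 ^ j + 1) :=
          Nat.mul_le_mul (Nat.mul_le_mul h1 (le_refl _)) (Nat.le_add_left 1 _)
  rcases lt_or_ge a b with hab | hab
  · have h1 : a.choose j ≤ b.choose j := Nat.choose_le_choose j (le_of_lt hab)
    have h2 : b.choose j ≤ b ^ j := Nat.choose_le_pow b j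
    have h3 : (1:ℕ) ≤ 3 ^ j := Nat.one_le_pow _ _ (by norm_num)
    calc a.choose j ≤ b ^ j := h1.trans h2
      _ ≤ 1 * 1 * (b ^ j + 1) := by omega
      _ ≤ 3 ^ j * ((a - b).choose j + 1) * (b ^ j + 1) :=
          Nat.mul_le_mul (Nat.mul_le_mul h3 (by omega)) (le_refl _)
  · set m := a - b with hm
    have ha : a = m + b := by omega
    have hv : a.choose j = ∑ k ∈ range (j + 1), m.choose k * b.choose (j - k) := by
      rw [ha, Nat.add_choose_eq]
      rw [Finset.Nat.sum_antidiagonal_eq_sum_range_succ (fun i k => m.choose i * b.choose k)]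
    calc a.choose j = ∑ k ∈ range (j + 1), m.choose k * b.choose (j - k) := hv
      _ ≤ ∑ k ∈ range (j + 1), m.choose k * b ^ (j - k) := by
          refine Finset.sum_le_sum fun k _ => ?_
          exact Nat.mul_le_mul_left _ (Nat.choose_le_pow b (j - k))
      _ ≤ 3 ^ j * (m.choose j + 1) * b ^ j := aux_main m b j hb
      _ ≤ 3 ^ j * (m.choose j + 1) * (b ^ j + 1) := Nat.mul_le_mul_left _ (by omega)
end

section
/- Let 0 < λ₁ < 1 < λ₂ with λ₁λ₂ < 1. Let (i_n)_{n≥1} be an i.i.d. sequence uniform on {1,2} and X = ∑_{m=0}^∞ λ_{i_1}⋯λ_{i_m} (with the empty product equal to 1), which converges almost surely. Define X^{(1)} = (1/λ₁) ∑_{m=1}^∞ λ_{i_1}⋯λ_{i_m} · o(m), where o(m) is the number of indices s ≤ m with i_s = 1. Then with c = (λ₂(1−λ₁)/(λ₂−1) + 1)^{−1} > 0, almost surely X^{(1)} ≥ c·X. -/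
open MeasureTheory ProbabilityTheory Finset Filter Topology

/-!
Almost surely every `L s` equals `l1` or `l2`, and the strong law of large numbers for `log L s`,
whose mean `log (l1 * l2) / 2` is negative, makes the products `P m = ∏_{s ≤ m} L s` decay
geometrically, so both series converge. The inequality is then deterministic. Let `u + 1` be the
first index with `L (u + 1) = l1`; it exists, for otherwise `P m = l2 ^ m`. The tail
`B = ∑_{m > u} P m` is at most `l1 X⁽¹⁾` because `o(m) ≥ 1` there, and at least
`P (u + 1) / (1 - l1)` because every factor is at least `l1`. The head is
`∑_{m ≤ u} l2 ^ m ≤ l2 ^ (u + 1) / (l2 - 1) = l2 P (u + 1) / (l1 (l2 - 1))`, hence at most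
`E B / l1` with `E = l2 (1 - l1) / (l2 - 1)`, and `X ≤ (E + 1) B / l1 ≤ (E + 1) X⁽¹⁾`.
-/

theorem prod_Icc_one_eq_prod_range {M : Type*} [CommMonoid M] (f : ℕ → M) (n : ℕ) :
    ∏ s ∈ Icc 1 n, f s = ∏ i ∈ range n, f (i + 1) := by
  induction n with
  | zero => simp
  | succ n ih => rw [prod_Icc_succ_top (by omega), ih, prod_range_succ]

section Deterministic

variable {f : ℕ → ℝ}

theorem prod_Icc_mul_pow_le_prod_Icc {a : ℝ} (ha : 0 ≤ a) (hf : ∀ s, a ≤ f s) (t j : ℕ) :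
    (∏ s ∈ Icc 1 t, f s) * a ^ j ≤ ∏ s ∈ Icc 1 (j + t), f s := by
  induction j with
  | zero => simp
  | succ j ih =>
    have hprod : 0 ≤ ∏ s ∈ Icc 1 (j + t), f s := prod_nonneg fun s _ => ha.trans (hf s)
    rw [pow_succ, ← mul_assoc, Nat.add_right_comm, prod_Icc_succ_top (by omega)]
    exact mul_le_mul ih (hf _) ha hprod

theorem prod_Icc_le_mul_tsum_prod_Icc {a : ℝ} (ha0 : 0 ≤ a) (ha1 : a < 1) (hf : ∀ s, a ≤ f s)
    (hP : Summable fun m => ∏ s ∈ Icc 1 m, f s) (t : ℕ) :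
    ∏ s ∈ Icc 1 t, f s ≤ (1 - a) * ∑' j, ∏ s ∈ Icc 1 (j + t), f s := by
  have hgeom : ∑' j, (∏ s ∈ Icc 1 t, f s) * a ^ j ≤ ∑' j, ∏ s ∈ Icc 1 (j + t), f s :=
    ((summable_geometric_of_lt_one ha0 ha1).mul_left _).tsum_le_tsum
      (prod_Icc_mul_pow_le_prod_Icc ha0 hf t)
      ((summable_nat_add_iff (f := fun m => ∏ s ∈ Icc 1 m, f s) t).2 hP)
  rw [tsum_mul_left, tsum_geometric_of_lt_one ha0 ha1, ← div_eq_mul_inv,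
    div_le_iff₀ (by linarith)] at hgeom
  linarith

theorem exists_first_eq_of_summable_prod {l1 l2 : ℝ} (hl2 : 1 ≤ l2)
    (hf : ∀ s, f s = l1 ∨ f s = l2) (hP : Summable fun m => ∏ s ∈ Icc 1 m, f s) :
    ∃ u, f (u + 1) = l1 ∧ ∀ s ∈ Icc 1 u, f s = l2 := by
  classical
  have hex : ∃ u, f (u + 1) = l1 := by
    by_contra! hne
    have hpow : ∀ m, ∏ s ∈ Icc 1 m, f s = l2 ^ m := fun m => by
      rw [prod_Icc_one_eq_prod_range, prod_eq_pow_card fun i _ => (hf _).resolve_left (hne i),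
        card_range]
    refine absurd hP.tendsto_atTop_zero fun h => ?_
    simp only [hpow] at h
    exact absurd (ge_of_tendsto' h fun m => one_le_pow₀ hl2) (by norm_num)
  refine ⟨Nat.find hex, Nat.find_spec hex, fun s hs => ?_⟩
  obtain ⟨hs1, hsu⟩ := mem_Icc.1 hs
  obtain ⟨i, rfl⟩ : ∃ i, s = i + 1 := ⟨s - 1, by omega⟩
  exact (hf _).resolve_left (Nat.find_min hex (by omega))

theorem formal_derivative_ge_const_mul_of_summable {l1 l2 : ℝ} (h0 : 0 < l1) (h1 : l1 < 1)
    (h2 : 1 < l2) (hf : ∀ s, f s = l1 ∨ f s = l2)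
    (hP : Summable fun m => ∏ s ∈ Icc 1 m, f s)
    (hPo : Summable fun m =>
      (∏ s ∈ Icc 1 m, f s) * ((Icc 1 m).filter (fun s => f s = l1)).card) :
    (l2 * (1 - l1) / (l2 - 1) + 1)⁻¹ * (∑' m, ∏ s ∈ Icc 1 m, f s) ≤
      (1 / l1) * ∑' m, (∏ s ∈ Icc 1 m, f s) *
        (((Icc 1 m).filter (fun s => f s = l1)).card : ℝ) := by
  set P : ℕ → ℝ := fun m => ∏ s ∈ Icc 1 m, f s
  set o : ℕ → ℝ := fun m => ((Icc 1 m).filter (fun s => f s = l1)).card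
  have hfl1 : ∀ s, l1 ≤ f s := fun s => (hf s).elim ge_of_eq fun h => by linarith
  have hPpos : ∀ m, 0 < P m := fun m => prod_pos fun s _ => h0.trans_le (hfl1 s)
  obtain ⟨u, hu, hhead⟩ := exists_first_eq_of_summable_prod h2.le hf hP
  set B := ∑' j, P (j + (u + 1))
  have hX : ∑' m, P m = ∑ m ∈ range (u + 1), l2 ^ m + B := by
    rw [← hP.sum_add_tsum_nat_add (u + 1)]
    congr 1
    refine sum_congr rfl fun m hm => prod_eq_pow_card (fun s hs => hhead s ?_) |>.trans ?_
    · simp only [mem_Icc, mem_range] at hs hm ⊢; omega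
    · simp
  have hPu : P (u + 1) = l2 ^ u * l1 := by
    simp only [P]
    rw [prod_Icc_succ_top (by omega), prod_eq_pow_card hhead, hu, Nat.card_Icc, Nat.add_sub_cancel]
  have hheadB : ∑ m ∈ range (u + 1), l2 ^ m ≤ l2 * (1 - l1) / (l2 - 1) * (B / l1) := by
    have hPB : l2 ^ u * l1 ≤ (1 - l1) * B :=
      hPu ▸ prod_Icc_le_mul_tsum_prod_Icc h0.le h1 hfl1 hP (u + 1)
    calc ∑ m ∈ range (u + 1), l2 ^ m ≤ l2 ^ (u + 1) / (l2 - 1) := by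
          rw [geom_sum_eq h2.ne']
          gcongr
          · linarith
      _ = l2 / (l2 - 1) * l2 ^ u := by ring
      _ ≤ l2 / (l2 - 1) * ((1 - l1) * B / l1) := by
          gcongr
          exact (le_div_iff₀ h0).2 hPB
      _ = l2 * (1 - l1) / (l2 - 1) * (B / l1) := by ring
  have hBY : B ≤ ∑' m, P m * o m := by
    rw [← hPo.sum_add_tsum_nat_add (u + 1)]
    refine le_add_of_nonneg_of_le
      (sum_nonneg fun m _ => mul_nonneg (hPpos m).le (Nat.cast_nonneg _)) ?_
    refine Summable.tsum_le_tsum (fun j => le_mul_of_one_le_right (hPpos _).le ?_)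
      ((summable_nat_add_iff (f := P) (u + 1)).2 hP) ((summable_nat_add_iff (u + 1)).2 hPo)
    exact Nat.one_le_cast.2 (card_pos.2 ⟨u + 1, mem_filter.2 ⟨mem_Icc.2 ⟨by omega, by omega⟩, hu⟩⟩)
  have hE : 0 ≤ l2 * (1 - l1) / (l2 - 1) := div_nonneg (by nlinarith) (by linarith)
  have hB : B ≤ B / l1 := le_div_self (tsum_nonneg fun _ => (hPpos _).le) h0 h1.le
  rw [inv_mul_le_iff₀ (by linarith), hX, one_div_mul_eq_div]
  calc ∑ m ∈ range (u + 1), l2 ^ m + B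
      ≤ l2 * (1 - l1) / (l2 - 1) * (B / l1) + B / l1 := add_le_add hheadB hB
    _ ≤ l2 * (1 - l1) / (l2 - 1) * ((∑' m, P m * o m) / l1) + (∑' m, P m * o m) / l1 := by
        gcongr
    _ = _ := by ring

end Deterministic

theorem exists_eventually_le_geometric_of_tendsto_log_div {P : ℕ → ℝ} (hP : ∀ n, 0 < P n)
    {c : ℝ} (hc : c < 0) (h : Tendsto (fun n => Real.log (P n) / n) atTop (𝓝 c)) :
    ∃ ρ, 0 < ρ ∧ ρ < 1 ∧ ∀ᶠ n in atTop, P n ≤ ρ ^ n := by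
  refine ⟨Real.exp (c / 2), Real.exp_pos _, Real.exp_lt_one_iff.2 (by linarith), ?_⟩
  filter_upwards [h.eventually_lt_const (by linarith : c < c / 2), eventually_gt_atTop 0]
    with n hn hn0
  rw [div_lt_iff₀ (by exact_mod_cast hn0)] at hn
  rw [← Real.exp_nat_mul, ← Real.exp_log (hP n)]
  exact Real.exp_le_exp.2 (by linarith)

theorem summable_pow_mul_of_eventually_le_geometric {P : ℕ → ℝ} (hP : ∀ n, 0 ≤ P n) {ρ : ℝ}
    (hρ0 : 0 ≤ ρ) (hρ1 : ρ < 1) (h : ∀ᶠ n in atTop, P n ≤ ρ ^ n) (k : ℕ) :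
    Summable fun n : ℕ => (n : ℝ) ^ k * P n := by
  refine Summable.of_norm_bounded_eventually
    (summable_pow_mul_geometric_of_norm_lt_one k (by rwa [Real.norm_of_nonneg hρ0])) ?_
  rw [Nat.cofinite_eq_atTop]
  filter_upwards [h] with n hn
  rw [Real.norm_of_nonneg (mul_nonneg (by positivity) (hP n))]
  gcongr

theorem ae_eq_or_eq_of_map_eq {Ω α : Type*} [MeasurableSpace Ω] [MeasurableSpace α]
    [MeasurableSingletonClass α] {μ : Measure Ω} {X : Ω → α} (hX : AEMeasurable X μ)
    {a b : ENNReal} {x y : α} (h : μ.map X = a • Measure.dirac x + b • Measure.dirac y) :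
    ∀ᵐ ω ∂μ, X ω = x ∨ X ω = y := by
  refine ae_of_ae_map hX (p := fun z => z = x ∨ z = y) ?_
  rw [h, ae_add_measure_iff]
  exact ⟨Measure.ae_smul_measure (by simp [ae_dirac_eq]) _,
    Measure.ae_smul_measure (by simp [ae_dirac_eq]) _⟩

theorem integrable_comp_and_integral_comp_of_map_eq {Ω : Type*} [MeasurableSpace Ω]
    {μ : Measure Ω} {X : Ω → ℝ} (hX : AEMeasurable X μ) {a b : ENNReal} (ha : a ≠ ⊤) (hb : b ≠ ⊤)
    {x y : ℝ} (h : μ.map X = a • Measure.dirac x + b • Measure.dirac y) {g : ℝ → ℝ}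
    (hg : Measurable g) :
    Integrable (fun ω => g (X ω)) μ ∧ μ[fun ω => g (X ω)] = a.toReal * g x + b.toReal * g y := by
  have hgx : Integrable g (a • Measure.dirac x) := (integrable_dirac (by simp)).smul_measure ha
  have hgy : Integrable g (b • Measure.dirac y) := (integrable_dirac (by simp)).smul_measure hb
  refine ⟨(integrable_map_measure hg.aestronglyMeasurable hX).1 (h ▸ hgx.add_measure hgy), ?_⟩
  rw [← integral_map hX hg.aestronglyMeasurable, h, integral_add_measure hgx hgy,
    integral_smul_measure, integral_smul_measure, integral_dirac, integral_dirac, smul_eq_mul,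
    smul_eq_mul]

/-- For `0 < λ₁ < 1 < λ₂` with `λ₁λ₂ < 1`, and `(L n)_{n ≥ 1}` i.i.d. taking the
values `λ₁` and `λ₂` each with probability `1/2`, set
`X = ∑_{m≥0} λ_{i_1}⋯λ_{i_m}` and
`X⁽¹⁾ = (1/λ₁) ∑_{m≥1} λ_{i_1}⋯λ_{i_m}·o(m)`, where `o(m)` is the number of
`s ≤ m` with `i_s = 1` (i.e. `L s = λ₁`).  Then almost surely the series for `X`
converges and `X⁽¹⁾ ≥ c·X` with `c = (λ₂(1−λ₁)/(λ₂−1) + 1)⁻¹`. -/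
theorem formal_derivative_ge_const_mul
    {Ω : Type*} [MeasurableSpace Ω] (μ : Measure Ω) [IsProbabilityMeasure μ]
    (l1 l2 : ℝ) (h0 : 0 < l1) (h1 : l1 < 1) (h2 : 1 < l2) (h3 : l1 * l2 < 1)
    (L : ℕ → Ω → ℝ) (hmeas : ∀ n, Measurable (L n))
    (hindep : iIndepFun L μ)
    (hdist : ∀ n, Measure.map (L n) μ =
      (1/2 : ENNReal) • Measure.dirac l1 + (1/2 : ENNReal) • Measure.dirac l2) :
    ∀ᵐ ω ∂μ,
      Summable (fun m : ℕ => ∏ s ∈ Finset.Icc 1 m, L s ω) ∧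
      (l2 * (1 - l1) / (l2 - 1) + 1)⁻¹ * (∑' m : ℕ, ∏ s ∈ Finset.Icc 1 m, L s ω) ≤
        (1 / l1) * ∑' m : ℕ, (∏ s ∈ Finset.Icc 1 m, L s ω) *
          (((Finset.Icc 1 m).filter (fun s => L s ω = l1)).card : ℝ) := by
  have hval : ∀ᵐ ω ∂μ, ∀ s, L s ω = l1 ∨ L s ω = l2 :=
    ae_all_iff.2 fun s => ae_eq_or_eq_of_map_eq (hmeas s).aemeasurable (hdist s)
  set Y : ℕ → Ω → ℝ := fun i ω => Real.log (L (i + 1) ω)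
  obtain ⟨hint, hmean⟩ := integrable_comp_and_integral_comp_of_map_eq (hmeas 1).aemeasurable
    (by simp) (by simp) (hdist 1) Real.measurable_log
  have hneg : μ[Y 0] < 0 := by
    rw [hmean, ← mul_add, ← Real.log_mul h0.ne' (by positivity)]
    exact mul_neg_of_pos_of_neg (by simp) (Real.log_neg (by positivity) h3)
  have hident : ∀ i, IdentDistrib (Y i) (Y 0) μ μ := fun i =>
    IdentDistrib.comp ⟨(hmeas _).aemeasurable, (hmeas _).aemeasurable, by rw [hdist, hdist]⟩
      Real.measurable_log
  have hpair : Pairwise fun i j => Y i ⟂ᵢ[μ] Y j := fun i j hij =>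
    (hindep.indepFun (by omega : i + 1 ≠ j + 1)).comp Real.measurable_log Real.measurable_log
  filter_upwards [hval, strong_law_ae_real Y hint hpair hident] with ω hv hlim
  have hL : ∀ s, 0 < L s ω := fun s => (hv s).elim (· ▸ h0) (· ▸ by linarith)
  have hpos : ∀ m, 0 < ∏ s ∈ Icc 1 m, L s ω := fun m => prod_pos fun s _ => hL s
  have hlog : ∀ n, ∑ i ∈ range n, Y i ω = Real.log (∏ s ∈ Icc 1 n, L s ω) := fun n => by
    rw [prod_Icc_one_eq_prod_range, Real.log_prod fun i _ => (hL _).ne']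
  obtain ⟨ρ, hρ0, hρ1, hρ⟩ :=
    exists_eventually_le_geometric_of_tendsto_log_div hpos hneg (by simpa only [hlog] using hlim)
  have hsum := summable_pow_mul_of_eventually_le_geometric (fun m => (hpos m).le) hρ0.le hρ1 hρ
  have hP : Summable fun m => ∏ s ∈ Icc 1 m, L s ω := by simpa using hsum 0
  have hPo : Summable fun m => (∏ s ∈ Icc 1 m, L s ω) *
      (((Icc 1 m).filter (fun s => L s ω = l1)).card : ℝ) :=
    (hsum 1).of_nonneg_of_le (fun m => mul_nonneg (hpos m).le (Nat.cast_nonneg _)) fun m => by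
      rw [pow_one, mul_comm]
      gcongr
      · exact (hpos m).le
      · exact (card_filter_le _ _).trans (by simp)
  exact ⟨hP, formal_derivative_ge_const_mul_of_summable h0 h1 h2 hv hP hPo⟩
end

section
/- Let 0 < λ₁ < 1 < λ₂ and 0 < s be such that κ := (λ₁^s + λ₂^s)/2 < 1, let (i_n) be i.i.d. uniform on {1,2}, and fix a natural number j. Then there exist constants C > 0 and θ ∈ (κ, 1) such that for all n, ∑_{m=1}^n E[λ_{i_1}⋯λ_{i_m} C(o(m),j) · λ_{i_{m+1}}^s ⋯ λ_{i_n}^s] ≤ C·θⁿ, provided also (λ₁+λ₂)/2 < 1. -/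
/-!
Bounding `C(o(m), j)` by `C(m, j)` and factoring the expectation by independence, the `m`-th
term is at most `C(m, j) ((λ₁ + λ₂)/2)^m κ^(n-m) ≤ n^j bⁿ` with `b = max ((λ₁ + λ₂)/2) κ < 1`.
So the sum is at most `n^(j+1) bⁿ`, which is `O(θⁿ)` for every `θ ∈ (b, 1)`.
-/

open MeasureTheory ProbabilityTheory Finset
open scoped ENNReal

section TwoPoint

variable {α : Type*} [MeasurableSpace α] [MeasurableSingletonClass α] {a b : α}

theorem integral_half_dirac_add_half_dirac (f : α → ℝ) :
    ∫ x, f x ∂((1/2 : ℝ≥0∞) • Measure.dirac a + (1/2 : ℝ≥0∞) • Measure.dirac b)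
      = (f a + f b) / 2 := by
  rw [integral_add_measure ((integrable_dirac (by simp)).smul_measure (by simp))
      ((integrable_dirac (by simp)).smul_measure (by simp)),
    integral_smul_measure, integral_smul_measure, integral_dirac, integral_dirac]
  norm_num
  ring

theorem ae_half_dirac_add_half_dirac {p : α → Prop} (ha : p a) (hb : p b) :
    ∀ᵐ x ∂((1/2 : ℝ≥0∞) • Measure.dirac a + (1/2 : ℝ≥0∞) • Measure.dirac b), p x := by
  rw [ae_add_measure_iff]
  exact ⟨Measure.ae_smul_measure (by simpa [ae_dirac_eq] using ha) _,
    Measure.ae_smul_measure (by simpa [ae_dirac_eq] using hb) _⟩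

end TwoPoint

theorem ProbabilityTheory.iIndepFun.integral_finset_prod_comp {Ω ι : Type*} [MeasurableSpace Ω]
    {μ : Measure Ω} {𝓧 : ι → Type*} {m𝓧 : ∀ i, MeasurableSpace (𝓧 i)} {X : (i : ι) → Ω → 𝓧 i}
    (hX : iIndepFun X μ) (mX : ∀ i, AEMeasurable (X i) μ) {f : (i : ι) → 𝓧 i → ℝ}
    (hf : ∀ i, AEStronglyMeasurable (f i) (μ.map (X i))) (S : Finset ι) :
    ∫ ω, ∏ i ∈ S, f i (X i ω) ∂μ = ∏ i ∈ S, ∫ ω, f i (X i ω) ∂μ := by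
  rw [← prod_coe_sort S]
  simp_rw [← prod_coe_sort S (fun i => f i (X i _))]
  exact (hX.precomp (g := ((↑) : S → ι)) Subtype.val_injective).integral_fun_prod_comp
      (fun i => mX i) (fun i => hf i)

theorem Finset.prod_Icc_mul_prod_Icc_eq_prod_ite {M : Type*} [CommMonoid M] {m n : ℕ}
    (hmn : m ≤ n) (v w : ℕ → M) :
    (∏ t ∈ Icc 1 m, v t) * ∏ t ∈ Icc (m + 1) n, w t
      = ∏ t ∈ Icc 1 n, if t ≤ m then v t else w t := by
  rw [prod_ite]
  congr 2 <;> ext t <;> simp only [mem_Icc, mem_filter] <;> omega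

theorem exists_pow_mul_pow_le_mul_pow (k : ℕ) {b θ : ℝ} (hb : 0 ≤ b) (hbθ : b < θ) :
    ∃ C > 0, ∀ n : ℕ, (n : ℝ) ^ k * b ^ n ≤ C * θ ^ n := by
  have hθ : 0 < θ := hb.trans_lt hbθ
  have hr : |b / θ| < 1 := by
    rwa [abs_of_nonneg (by positivity), div_lt_one hθ]
  obtain ⟨C, hC⟩ := (tendsto_pow_const_mul_const_pow_of_abs_lt_one k hr).bddAbove_range
  refine ⟨max C 1, by positivity, fun n => ?_⟩
  calc (n : ℝ) ^ k * b ^ n = (n : ℝ) ^ k * (b / θ) ^ n * θ ^ n := by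
        rw [mul_assoc, ← mul_pow, div_mul_cancel₀ _ hθ.ne']
    _ ≤ max C 1 * θ ^ n := by
        gcongr
        exact (hC (Set.mem_range_self n)).trans (le_max_left _ _)

section IidTwoPoint

variable {Ω ι : Type*} [MeasurableSpace Ω] {μ : Measure Ω} {L : ι → Ω → ℝ} {a b : ℝ}

theorem integral_prod_comp_of_map_eq_half_dirac_add_half_dirac (hindep : iIndepFun L μ)
    (hmeas : ∀ t, Measurable (L t))
    (hdist : ∀ t, Measure.map (L t) μ =
      (1/2 : ℝ≥0∞) • Measure.dirac a + (1/2 : ℝ≥0∞) • Measure.dirac b)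
    {f : ι → ℝ → ℝ} (hf : ∀ t, Measurable (f t)) (S : Finset ι) :
    ∫ ω, ∏ t ∈ S, f t (L t ω) ∂μ = ∏ t ∈ S, (f t a + f t b) / 2 := by
  rw [hindep.integral_finset_prod_comp (fun t => (hmeas t).aemeasurable)
    (fun t => (hf t).aestronglyMeasurable)]
  refine prod_congr rfl fun t _ => ?_
  rw [← integral_map (hmeas t).aemeasurable (hf t).aestronglyMeasurable, hdist t,
    integral_half_dirac_add_half_dirac]

end IidTwoPoint

theorem integral_prod_mul_choose_mul_prod_rpow_le {Ω : Type*} [MeasurableSpace Ω]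
    {μ : Measure Ω} {L : ℕ → Ω → ℝ} {a b : ℝ} (ha : 0 < a) (hb : 0 < b)
    (hindep : iIndepFun L μ) (hmeas : ∀ t, Measurable (L t))
    (hdist : ∀ t, Measure.map (L t) μ =
      (1/2 : ℝ≥0∞) • Measure.dirac a + (1/2 : ℝ≥0∞) • Measure.dirac b)
    (s : ℝ) (j : ℕ) {m n : ℕ} (hmn : m ≤ n) :
    ∫ ω, (∏ t ∈ Icc 1 m, L t ω) * (((Icc 1 m).filter (fun t => L t ω = a)).card.choose j : ℝ) *
        ∏ t ∈ Icc (m + 1) n, L t ω ^ s ∂μ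
      ≤ m.choose j * ((a + b) / 2) ^ m * ((a ^ s + b ^ s) / 2) ^ (n - m) := by
  set f : ℕ → ℝ → ℝ := fun t x => if t ≤ m then x else x ^ s
  have hf : ∀ t, Measurable (f t) := fun t => by
    simp only [f]; split_ifs <;> fun_prop
  have hsplit : ∀ ω, (∏ t ∈ Icc 1 m, L t ω) * ∏ t ∈ Icc (m + 1) n, L t ω ^ s
      = ∏ t ∈ Icc 1 n, f t (L t ω) := fun ω =>
    prod_Icc_mul_prod_Icc_eq_prod_ite hmn _ _
  have hmoment : ∫ ω, ∏ t ∈ Icc 1 n, f t (L t ω) ∂μ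
      = ((a + b) / 2) ^ m * ((a ^ s + b ^ s) / 2) ^ (n - m) := by
    rw [integral_prod_comp_of_map_eq_half_dirac_add_half_dirac hindep hmeas hdist hf]
    have := prod_Icc_mul_prod_Icc_eq_prod_ite hmn (fun _ => (a + b) / 2)
      (fun _ => (a ^ s + b ^ s) / 2)
    simp only [prod_const, Nat.card_Icc, Nat.add_sub_cancel, Nat.add_sub_add_right] at this
    rw [this]
    exact prod_congr rfl fun t _ => by simp only [f]; split_ifs <;> rfl
  have hpos : ∀ᵐ ω ∂μ, ∀ t, 0 < L t ω := ae_all_iff.2 fun t =>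
    ae_of_ae_map (hmeas t).aemeasurable (by
      rw [hdist t]; exact ae_half_dirac_add_half_dirac ha hb)
  -- the product is integrable because its integral, computed above, is nonzero
  have hint : Integrable (fun ω => ∏ t ∈ Icc 1 n, f t (L t ω)) μ :=
    Integrable.of_integral_ne_zero (by rw [hmoment]; positivity)
  calc _ ≤ ∫ ω, (m.choose j : ℝ) * ∏ t ∈ Icc 1 n, f t (L t ω) ∂μ := by
        refine integral_mono_of_nonneg ?_ (hint.const_mul _) ?_
        · filter_upwards [hpos] with ω hω
          exact mul_nonneg (mul_nonneg (prod_nonneg fun t _ => (hω t).le) (Nat.cast_nonneg _))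
            (prod_nonneg fun t _ => Real.rpow_nonneg (hω t).le s)
        · filter_upwards [hpos] with ω hω
          rw [← hsplit, mul_right_comm, mul_comm]
          refine mul_le_mul_of_nonneg_right ?_ (mul_nonneg (prod_nonneg fun t _ => (hω t).le)
            (prod_nonneg fun t _ => Real.rpow_nonneg (hω t).le s))
          gcongr
          calc _ ≤ (Icc 1 m).card := card_filter_le _ _
            _ = m := by simp
    _ = _ := by rw [integral_const_mul, hmoment, mul_assoc]

theorem sum_Icc_choose_mul_pow_mul_pow_le (j : ℕ) {a κ b : ℝ} (ha : 0 ≤ a) (hκ : 0 ≤ κ)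
    (hab : a ≤ b) (hκb : κ ≤ b) (n : ℕ) :
    ∑ m ∈ Icc 1 n, (m.choose j : ℝ) * a ^ m * κ ^ (n - m) ≤ (n : ℝ) ^ (j + 1) * b ^ n := by
  calc ∑ m ∈ Icc 1 n, (m.choose j : ℝ) * a ^ m * κ ^ (n - m)
      ≤ ∑ m ∈ Icc 1 n, (n : ℝ) ^ j * b ^ n := by
        refine sum_le_sum fun m hm => ?_
        have hmn : m ≤ n := (mem_Icc.1 hm).2
        calc (m.choose j : ℝ) * a ^ m * κ ^ (n - m)
            ≤ (n : ℝ) ^ j * b ^ m * b ^ (n - m) := by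
              have hchoose : (m.choose j : ℝ) ≤ (n : ℝ) ^ j := by
                exact_mod_cast (Nat.choose_le_pow m j).trans (Nat.pow_le_pow_left hmn j)
              gcongr
              exact mul_nonneg (by positivity) (pow_nonneg (ha.trans hab) m)
          _ = (n : ℝ) ^ j * b ^ n := by rw [mul_assoc, ← pow_add, Nat.add_sub_cancel' hmn]
    _ = (n : ℝ) ^ (j + 1) * b ^ n := by simp [pow_succ]; ring

theorem sum_expectation_exponential_decay_general
    {Ω : Type*} [MeasurableSpace Ω] (μ : Measure Ω)
    (l1 l2 : ℝ) (h0 : 0 < l1) (h2 : 1 < l2)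
    (s : ℝ) (hκ : (l1 ^ s + l2 ^ s) / 2 < 1)
    (hmean : (l1 + l2) / 2 < 1)
    (L : ℕ → Ω → ℝ) (hmeas : ∀ n, Measurable (L n))
    (hindep : iIndepFun L μ)
    (hdist : ∀ n, Measure.map (L n) μ =
      (1/2 : ENNReal) • Measure.dirac l1 + (1/2 : ENNReal) • Measure.dirac l2)
    (j : ℕ) :
    ∃ C > (0 : ℝ), ∃ θ : ℝ, (l1 ^ s + l2 ^ s) / 2 < θ ∧ θ < 1 ∧
      ∀ n : ℕ,
        ∑ m ∈ Finset.Icc 1 n,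
            ∫ ω, (∏ t ∈ Finset.Icc 1 m, L t ω) *
              ((((Finset.Icc 1 m).filter (fun t => L t ω = l1)).card.choose j : ℝ)) *
              ∏ t ∈ Finset.Icc (m + 1) n, (L t ω) ^ s ∂μ
          ≤ C * θ ^ n := by
  have hl2 : 0 < l2 := one_pos.trans h2
  set b := max ((l1 + l2) / 2) ((l1 ^ s + l2 ^ s) / 2)
  have hb : b < 1 := max_lt hmean hκ
  obtain ⟨C, hC, hbound⟩ :=
    exists_pow_mul_pow_le_mul_pow (j + 1) (by positivity) (left_lt_add_div_two.2 hb)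
  refine ⟨C, hC, (b + 1) / 2, (le_max_right _ _).trans_lt (left_lt_add_div_two.2 hb),
    add_div_two_lt_right.2 hb, fun n => ?_⟩
  calc _ ≤ ∑ m ∈ Icc 1 n, (m.choose j : ℝ) * ((l1 + l2) / 2) ^ m
          * ((l1 ^ s + l2 ^ s) / 2) ^ (n - m) :=
        sum_le_sum fun m hm => integral_prod_mul_choose_mul_prod_rpow_le h0 hl2 hindep hmeas
          hdist s j (mem_Icc.1 hm).2
    _ ≤ (n : ℝ) ^ (j + 1) * b ^ n :=
        sum_Icc_choose_mul_pow_mul_pow_le j (by positivity) (by positivity)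
          (le_max_left _ _) (le_max_right _ _) n
    _ ≤ C * ((b + 1) / 2) ^ n := hbound n

/-- For `0 < λ₁ < 1 < λ₂`, `s > 0` with `κ := (λ₁^s + λ₂^s)/2 < 1` and
`(λ₁+λ₂)/2 < 1`, `(L n)` i.i.d. with values `λ₁, λ₂` of probability `1/2` each,
and a fixed natural `j`, there exist `C > 0` and `θ ∈ (κ, 1)` such that for all
`n`, `∑_{m=1}^n E[λ_{i_1}⋯λ_{i_m}·C(o(m),j)·λ_{i_{m+1}}^s⋯λ_{i_n}^s] ≤ C·θⁿ`. -/
theorem sum_expectation_exponential_decay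
    {Ω : Type*} [MeasurableSpace Ω] (μ : Measure Ω) [IsProbabilityMeasure μ]
    (l1 l2 : ℝ) (h0 : 0 < l1) (h1 : l1 < 1) (h2 : 1 < l2)
    (s : ℝ) (hs : 0 < s) (hκ : (l1 ^ s + l2 ^ s) / 2 < 1)
    (hmean : (l1 + l2) / 2 < 1)
    (L : ℕ → Ω → ℝ) (hmeas : ∀ n, Measurable (L n))
    (hindep : iIndepFun L μ)
    (hdist : ∀ n, Measure.map (L n) μ =
      (1/2 : ENNReal) • Measure.dirac l1 + (1/2 : ENNReal) • Measure.dirac l2)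
    (j : ℕ) :
    ∃ C > (0 : ℝ), ∃ θ : ℝ, (l1 ^ s + l2 ^ s) / 2 < θ ∧ θ < 1 ∧
      ∀ n : ℕ,
        ∑ m ∈ Finset.Icc 1 n,
            ∫ ω, (∏ t ∈ Finset.Icc 1 m, L t ω) *
              ((((Finset.Icc 1 m).filter (fun t => L t ω = l1)).card.choose j : ℝ)) *
              ∏ t ∈ Finset.Icc (m + 1) n, (L t ω) ^ s ∂μ
          ≤ C * θ ^ n :=
  sum_expectation_exponential_decay_general μ l1 l2 h0 h2 s hκ hmean L hmeas hindep hdist j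
end
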